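/- arXiv:1904.01645 — 2 statements merged into one kernel-verified Lean document; each statement's English description precedes it below -/
import Mathlib

section
/- Let q be a unit quaternion, let u be a purely imaginary quaternion with ‖u‖ = 1, and let θ ∈ [0, π]. Set e = cos(θ/2) + sin(θ/2)·u (the unit quaternion representing a rotation by angle θ about axis u). Then min(‖q − q·e‖, ‖q + q·e‖) = 2·sin(θ/4). -/
/-!
Left multiplication by the unit quaternion `q` is an isometry, so the two distances are `‖1 - e‖`
and `‖1 + e‖`. Since `u` is a unit vector orthogonal to the real axis, these are
`√((1 ∓ cos (θ/2))² + sin² (θ/2)) = √(2 ∓ 2 cos (θ/2))`, that is `2 sin (θ/4)` and `2 cos (θ/4)`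
by the half-angle formulas, and `sin ≤ cos` on `[0, π/4]`.
-/

open Real

namespace Quaternion

variable {u : ℍ[ℝ]}

theorem norm_sq_coe_add_of_re_eq_zero (a : ℝ) {v : ℍ[ℝ]} (hv : v.re = 0) :
    ‖(a : ℍ[ℝ]) + v‖ ^ 2 = a ^ 2 + ‖v‖ ^ 2 := by
  simp only [sq, ← normSq_eq_norm_mul_self, normSq_add, normSq_coe, coe_mul_eq_smul, re_smul,
    re_star, hv, smul_zero, mul_zero, add_zero]

theorem norm_sq_coe_add_smul_of_re_eq_zero (hu_im : u.re = 0) (hu : ‖u‖ = 1) (a b : ℝ) :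
    ‖(a : ℍ[ℝ]) + b • u‖ ^ 2 = a ^ 2 + b ^ 2 := by
  rw [norm_sq_coe_add_of_re_eq_zero a (by simp [hu_im]), norm_smul, hu, mul_one, norm_eq_abs,
    sq_abs]

theorem norm_one_sub_cos_add_sin_smul (hu_im : u.re = 0) (hu : ‖u‖ = 1) (φ : ℝ) :
    ‖1 - ((cos φ : ℍ[ℝ]) + sin φ • u)‖ = 2 * |sin (φ / 2)| := by
  have hsplit : 1 - ((cos φ : ℍ[ℝ]) + sin φ • u) = ((1 - cos φ : ℝ) : ℍ[ℝ]) + (-sin φ) • u := by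
    push_cast; module
  rw [← sq_eq_sq₀ (norm_nonneg _) (by positivity), hsplit,
    norm_sq_coe_add_smul_of_re_eq_zero hu_im hu, mul_pow, sq_abs, sin_sq_eq_half_sub,
    mul_div_cancel₀ φ two_ne_zero]
  nlinarith [sin_sq_add_cos_sq φ]

theorem norm_one_add_cos_add_sin_smul (hu_im : u.re = 0) (hu : ‖u‖ = 1) (φ : ℝ) :
    ‖1 + ((cos φ : ℍ[ℝ]) + sin φ • u)‖ = 2 * |cos (φ / 2)| := by
  have hsplit : 1 + ((cos φ : ℍ[ℝ]) + sin φ • u) = ((1 + cos φ : ℝ) : ℍ[ℝ]) + sin φ • u := by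
    push_cast; module
  rw [← sq_eq_sq₀ (norm_nonneg _) (by positivity), hsplit,
    norm_sq_coe_add_smul_of_re_eq_zero hu_im hu, mul_pow, sq_abs, cos_sq (φ / 2),
    mul_div_cancel₀ φ two_ne_zero]
  nlinarith [sin_sq_add_cos_sq φ]

end Quaternion

theorem Real.sin_le_cos_of_nonneg_of_le_pi_div_four {x : ℝ} (hx0 : 0 ≤ x) (hx : x ≤ π / 4) :
    sin x ≤ cos x := by
  rw [← cos_pi_div_two_sub]
  apply cos_le_cos_of_nonneg_of_le_pi <;> linarith [pi_pos]

/-- If `q` is a unit quaternion, `u` a purely imaginary unit quaternion, `θ ∈ [0, π]`,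
and `e = cos(θ/2) + sin(θ/2)·u`, then `min (‖q - q·e‖, ‖q + q·e‖) = 2·sin(θ/4)`. -/
theorem quaternion_distance_eq_two_sin_quarter_angle
    (q u : Quaternion ℝ) (hq : ‖q‖ = 1) (hu_im : u.re = 0) (hu : ‖u‖ = 1)
    (θ : ℝ) (hθ0 : 0 ≤ θ) (hθπ : θ ≤ Real.pi)
    (e : Quaternion ℝ) (he : e = (Real.cos (θ / 2) : Quaternion ℝ) + Real.sin (θ / 2) • u) :
    min ‖q - q * e‖ ‖q + q * e‖ = 2 * Real.sin (θ / 4) := by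
  have hquarter : θ / 2 / 2 = θ / 4 := by ring
  have hsin : 0 ≤ sin (θ / 4) := sin_nonneg_of_nonneg_of_le_pi (by linarith) (by linarith)
  have hcos : 0 ≤ cos (θ / 4) := cos_nonneg_of_mem_Icc ⟨by linarith [pi_pos], by linarith⟩
  rw [← mul_one_sub, ← mul_one_add, norm_mul, norm_mul, hq, one_mul, one_mul, he,
    Quaternion.norm_one_sub_cos_add_sin_smul hu_im hu,
    Quaternion.norm_one_add_cos_add_sin_smul hu_im hu, hquarter, abs_of_nonneg hsin,
    abs_of_nonneg hcos, min_eq_left]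
  gcongr
  exact sin_le_cos_of_nonneg_of_le_pi_div_four (by linarith) (by linarith)
end

section
/- The polynomial p = 2·z₂z₆ − 2·z₃z₅ in the real polynomial ring ℝ[z₁, …, z₆] is not a sum of squares of polynomials. -/
open MvPolynomial

theorem IsSumSq.map {R S F : Type*} [NonUnitalNonAssocSemiring R] [NonUnitalNonAssocSemiring S]
    [FunLike F R S] [NonUnitalRingHomClass F R S] (f : F) {s : R} (hs : IsSumSq s) :
    IsSumSq (f s) := by
  induction hs with
  | zero => simp
  | sq_add a _ ih => simpa using IsSumSq.sq_add (f a) ih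

theorem MvPolynomial.eval_nonneg_of_isSumSq {σ : Type*} {p : MvPolynomial σ ℝ} (hp : IsSumSq p)
    (v : σ → ℝ) : 0 ≤ eval v p :=
  (hp.map (eval v)).nonneg

/-- The polynomial `2·z₂z₆ - 2·z₃z₅ ∈ ℝ[z₁, …, z₆]` is not a sum of squares. -/
theorem not_isSumSq_handedness_hessian_form :
    ¬ IsSumSq (2 * X 1 * X 5 - 2 * X 2 * X 4 :
        MvPolynomial (Fin 6) ℝ) := by
  intro h
  -- the point `z = e₂ - e₆` (indices are 0-based in `Fin 6`), where the form equals `-2`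
  have h_eval := eval_nonneg_of_isSumSq h (Pi.single 1 1 - Pi.single 5 1)
  norm_num [Pi.single_apply, Fin.ext_iff] at h_eval
end
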